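/- Let T be a planar rooted tree and v a vertex of T. Let T_v be the subtree of T consisting of v and everything above v in the tree order, and let T^v be the subtree obtained from T by removing all vertices of T_v strictly above v. Then the square formed by the inclusions v → T_v, v → T^v, T_v → T and T^v → T is a pushout square in the category FPT of planar rooted trees and order embeddings preserving the depth-first ordering. -/
import Mathlib

/-- A finite rooted tree, encoded as a finite partial order (the tree order,
with the root as maximum element) in which the set of elements above any
vertex is a chain (the path from the vertex to the root). -/
structure RTree where
  V : Type
  finite : Finite V
  le : V → V → Prop
  le_refl : ∀ v, le v v
  le_antisymm : ∀ v w, le v w → le w v → v = w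
  le_trans : ∀ u v w, le u v → le v w → le u w
  root : V
  le_root : ∀ v, le v root
  up_total : ∀ u v w, le u v → le u w → le v w ∨ le w v

/-- A planar rooted tree: a rooted tree together with its depth-first ordering,
a linear order on the vertices arising from the total orderings of the incoming
edges at each vertex via a clockwise depth-first tree walk.  Such linear orders
are exactly those in which ancestors precede descendants and every principal
downset of the tree order is an interval. -/
structure PRTree extends RTree where
  dfle : V → V → Prop
  dfle_refl : ∀ v, dfle v v
  dfle_antisymm : ∀ v w, dfle v w → dfle w v → v = w
  dfle_trans : ∀ u v w, dfle u v → dfle v w → dfle u w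
  dfle_total : ∀ v w, dfle v w ∨ dfle w v
  dfle_of_le : ∀ v w, le v w → dfle w v
  downset_interval : ∀ u a b c, le a u → le c u → dfle a b → dfle b c → le b u

/-- A morphism in the category `FPT`: an order embedding of vertex sets which
preserves the depth-first ordering (but need not preserve the root). -/
structure FPTHom (T U : PRTree) where
  toFun : T.V → U.V
  inj : Function.Injective toFun
  map_le : ∀ v w, T.le v w → U.le (toFun v) (toFun w)
  reflect_le : ∀ v w, U.le (toFun v) (toFun w) → T.le v w
  map_dfle : ∀ v w, T.dfle v w → U.dfle (toFun v) (toFun w)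

def FPTHom.comp {T U W : PRTree} (g : FPTHom U W) (f : FPTHom T U) :
    FPTHom T W where
  toFun := fun v => g.toFun (f.toFun v)
  inj := fun _ _ h => f.inj (g.inj h)
  map_le := fun v w h => g.map_le _ _ (f.map_le v w h)
  reflect_le := fun v w h => f.reflect_le _ _ (g.reflect_le _ _ h)
  map_dfle := fun v w h => g.map_dfle _ _ (f.map_dfle v w h)

/-- The planar rooted tree with a single vertex. -/
def singlePRT : PRTree where
  V := PUnit
  finite := inferInstance
  le _ _ := True
  le_refl _ := trivial
  le_antisymm a b _ _ := @Subsingleton.elim PUnit _ a b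
  le_trans _ _ _ _ _ := trivial
  root := PUnit.unit
  le_root _ := trivial
  up_total _ _ _ _ _ := Or.inl trivial
  dfle _ _ := True
  dfle_refl _ := trivial
  dfle_antisymm a b _ _ := @Subsingleton.elim PUnit _ a b
  dfle_trans _ _ _ _ _ := trivial
  dfle_total _ _ := Or.inl trivial
  dfle_of_le _ _ _ := trivial
  downset_interval _ _ _ _ _ _ _ _ := trivial

/-- The subtree `T_v` of `T` consisting of `v` and everything above `v`
in the tree order, rooted at `v`, with the induced planar structure. -/
def PRTree.above (T : PRTree) (v : T.V) : PRTree where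
  V := {w : T.V // T.le w v}
  finite := by haveI := T.finite; exact Subtype.finite
  le a b := T.le a.1 b.1
  le_refl a := T.le_refl a.1
  le_antisymm a b h h' := Subtype.ext (T.le_antisymm a.1 b.1 h h')
  le_trans a b c h h' := T.le_trans a.1 b.1 c.1 h h'
  root := ⟨v, T.le_refl v⟩
  le_root a := a.2
  up_total a b c h h' := T.up_total a.1 b.1 c.1 h h'
  dfle a b := T.dfle a.1 b.1
  dfle_refl a := T.dfle_refl a.1
  dfle_antisymm a b h h' := Subtype.ext (T.dfle_antisymm a.1 b.1 h h')
  dfle_trans a b c h h' := T.dfle_trans a.1 b.1 c.1 h h'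
  dfle_total a b := T.dfle_total a.1 b.1
  dfle_of_le a b h := T.dfle_of_le a.1 b.1 h
  downset_interval u a b c h1 h2 h3 h4 := T.downset_interval u.1 a.1 b.1 c.1 h1 h2 h3 h4

/-- The subtree `T^v` of `T` obtained by removing every vertex of `T_v`
strictly above `v`, with the induced planar structure. -/
def PRTree.below (T : PRTree) (v : T.V) : PRTree where
  V := {w : T.V // T.le w v → w = v}
  finite := by haveI := T.finite; exact Subtype.finite
  le a b := T.le a.1 b.1
  le_refl a := T.le_refl a.1
  le_antisymm a b h h' := Subtype.ext (T.le_antisymm a.1 b.1 h h')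
  le_trans a b c h h' := T.le_trans a.1 b.1 c.1 h h'
  root := ⟨T.root, fun h => T.le_antisymm T.root v h (T.le_root v)⟩
  le_root a := T.le_root a.1
  up_total a b c h h' := T.up_total a.1 b.1 c.1 h h'
  dfle a b := T.dfle a.1 b.1
  dfle_refl a := T.dfle_refl a.1
  dfle_antisymm a b h h' := Subtype.ext (T.dfle_antisymm a.1 b.1 h h')
  dfle_trans a b c h h' := T.dfle_trans a.1 b.1 c.1 h h'
  dfle_total a b := T.dfle_total a.1 b.1
  dfle_of_le a b h := T.dfle_of_le a.1 b.1 h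
  downset_interval u a b c h1 h2 h3 h4 := T.downset_interval u.1 a.1 b.1 c.1 h1 h2 h3 h4

/-- The inclusion of the subtree `T^v` into `T`, a morphism in `FPT`. -/
def belowIncl (T : PRTree) (v : T.V) : FPTHom (T.below v) T where
  toFun := fun a => a.1
  inj := fun _ _ h => Subtype.ext h
  map_le := fun _ _ h => h
  reflect_le := fun _ _ h => h
  map_dfle := fun _ _ h => h

/-- The inclusion of the single-vertex tree into `T^v` as the vertex `v`,
a morphism in `FPT`. -/
def singleToBelow (T : PRTree) (v : T.V) : FPTHom singlePRT (T.below v) where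
  toFun := fun _ => ⟨v, fun _ => rfl⟩
  inj := fun a b _ => @Subsingleton.elim PUnit _ a b
  map_le := fun _ _ _ => T.le_refl v
  reflect_le := fun _ _ _ => trivial
  map_dfle := fun _ _ _ => T.dfle_refl v

/-- The inclusion of the subtree `T_v` into `T`, a morphism in `FPT`. -/
def aboveIncl (T : PRTree) (v : T.V) : FPTHom (T.above v) T where
  toFun := fun a => a.1
  inj := fun _ _ h => Subtype.ext h
  map_le := fun _ _ h => h
  reflect_le := fun _ _ h => h
  map_dfle := fun _ _ h => h

/-- The inclusion of the single-vertex tree into `T_v` as its root `v`,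
a morphism in `FPT`. -/
def singleToAbove (T : PRTree) (v : T.V) : FPTHom singlePRT (T.above v) where
  toFun := fun _ => ⟨v, T.le_refl v⟩
  inj := fun a b _ => @Subsingleton.elim PUnit _ a b
  map_le := fun _ _ _ => T.le_refl v
  reflect_le := fun _ _ _ => trivial
  map_dfle := fun _ _ _ => T.dfle_refl v


theorem FPTHom.ext' {T U : PRTree} {f g : FPTHom T U} (h : f.toFun = g.toFun) : f = g := by
  cases f; cases g; cases h; rfl

/-- For a planar rooted tree `T` and a vertex `v`, the square formed by the
inclusions `v → T_v`, `v → T^v`, `T_v → T` and `T^v → T` is a pushout square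
in the category `FPT` of planar rooted trees and order embeddings preserving
the depth-first ordering. -/
theorem pushout_square (T : PRTree) (v : T.V) :
    FPTHom.comp (aboveIncl T v) (singleToAbove T v) =
      FPTHom.comp (belowIncl T v) (singleToBelow T v) ∧
    ∀ (W : PRTree) (f : FPTHom (T.above v) W) (g : FPTHom (T.below v) W),
      FPTHom.comp f (singleToAbove T v) = FPTHom.comp g (singleToBelow T v) →
      ∃! h : FPTHom T W,
        FPTHom.comp h (aboveIncl T v) = f ∧ FPTHom.comp h (belowIncl T v) = g := by
  classical
  refine ⟨FPTHom.ext' rfl, ?_⟩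
  intro W f g hcomm
  have hfv : f.toFun ⟨v, T.le_refl v⟩ = g.toFun ⟨v, fun _ => rfl⟩ :=
    congrArg (fun k => k.toFun PUnit.unit) hcomm
  set F : T.V → W.V :=
    fun w => if h : T.le w v then f.toFun ⟨w, h⟩ else g.toFun ⟨w, fun h' => absurd h' h⟩
    with hFdef
  have hFa : ∀ (w : T.V) (h : T.le w v), F w = f.toFun ⟨w, h⟩ := fun w h => dif_pos h
  have hFb' : ∀ (w : T.V) (h : ¬ T.le w v),
      F w = g.toFun ⟨w, fun h' => absurd h' h⟩ := fun w h => dif_neg h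
  have hFb : ∀ (b : (T.below v).V), F b.1 = g.toFun b := by
    intro b
    obtain ⟨w, hw⟩ := b
    by_cases h : T.le w v
    · have hwv : w = v := hw h
      subst hwv
      rw [hFa w h]
      exact hfv
    · exact hFb' w h
  -- map_le
  have hml : ∀ x y, T.le x y → W.le (F x) (F y) := by
    intro x y hxy
    by_cases hx : T.le x v
    · by_cases hy : T.le y v
      · rw [hFa x hx, hFa y hy]; exact f.map_le ⟨x, hx⟩ ⟨y, hy⟩ hxy
      · have hvy : T.le v y := (T.up_total x v y hx hxy).resolve_right hy
        rw [hFa x hx, hFb' y hy]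
        have h1 : W.le (f.toFun ⟨x, hx⟩) (f.toFun ⟨v, T.le_refl v⟩) :=
          f.map_le ⟨x, hx⟩ ⟨v, T.le_refl v⟩ hx
        have h2 : W.le (g.toFun ⟨v, fun _ => rfl⟩) (g.toFun ⟨y, fun h' => absurd h' hy⟩) :=
          g.map_le _ _ hvy
        exact W.le_trans _ _ _ (hfv ▸ h1) h2
    · have hy : ¬ T.le y v := fun h => hx (T.le_trans x y v hxy h)
      rw [hFb' x hx, hFb' y hy]
      exact g.map_le _ _ hxy
  -- reflect_le
  have hrl : ∀ x y, W.le (F x) (F y) → T.le x y := by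
    intro x y hxy
    by_cases hx : T.le x v
    · by_cases hy : T.le y v
      · rw [hFa x hx, hFa y hy] at hxy
        exact f.reflect_le ⟨x, hx⟩ ⟨y, hy⟩ hxy
      · rw [hFa x hx, hFb' y hy] at hxy
        have h1 : W.le (f.toFun ⟨x, hx⟩) (g.toFun ⟨v, fun _ => rfl⟩) := by
          rw [← hfv]; exact f.map_le ⟨x, hx⟩ ⟨v, T.le_refl v⟩ hx
        rcases W.up_total _ _ _ hxy h1 with h2 | h2
        · exact absurd (g.reflect_le _ _ h2) hy
        · exact T.le_trans x v y hx (g.reflect_le _ _ h2)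
    · by_cases hy : T.le y v
      · rw [hFb' x hx, hFa y hy] at hxy
        have h1 : W.le (f.toFun ⟨y, hy⟩) (g.toFun ⟨v, fun _ => rfl⟩) := by
          rw [← hfv]; exact f.map_le ⟨y, hy⟩ ⟨v, T.le_refl v⟩ hy
        exact absurd (g.reflect_le _ _ (W.le_trans _ _ _ hxy h1)) hx
      · rw [hFb' x hx, hFb' y hy] at hxy
        exact g.reflect_le _ _ hxy
  -- injectivity
  have hinj : Function.Injective F := by
    intro x y hxy
    exact T.le_antisymm x y (hrl x y (hxy ▸ W.le_refl (F x)))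
      (hrl y x (hxy ▸ W.le_refl (F x)))
  -- map_dfle
  have hmd : ∀ x y, T.dfle x y → W.dfle (F x) (F y) := by
    intro x y hxy
    by_cases hx : T.le x v
    · by_cases hy : T.le y v
      · rw [hFa x hx, hFa y hy]; exact f.map_dfle ⟨x, hx⟩ ⟨y, hy⟩ hxy
      · rw [hFa x hx, hFb' y hy]
        rcases W.dfle_total (f.toFun ⟨x, hx⟩) (g.toFun ⟨y, fun h' => absurd h' hy⟩) with h | h
        · exact h
        · exfalso
          have hdvx : T.dfle v x := T.dfle_of_le x v hx
          have h1 : W.dfle (g.toFun ⟨v, fun _ => rfl⟩) (g.toFun ⟨y, fun h' => absurd h' hy⟩) :=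
            g.map_dfle _ _ (T.dfle_trans v x y hdvx hxy)
          have h2 : W.le (g.toFun ⟨y, fun h' => absurd h' hy⟩) (f.toFun ⟨v, T.le_refl v⟩) :=
            W.downset_interval (f.toFun ⟨v, T.le_refl v⟩) (g.toFun ⟨v, fun _ => rfl⟩)
              (g.toFun ⟨y, fun h' => absurd h' hy⟩) (f.toFun ⟨x, hx⟩)
              (by rw [← hfv]; exact W.le_refl _)
              (f.map_le ⟨x, hx⟩ ⟨v, T.le_refl v⟩ hx) h1 h
          rw [hfv] at h2
          exact hy (g.reflect_le _ _ h2)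
    · by_cases hy : T.le y v
      · rw [hFb' x hx, hFa y hy]
        rcases T.dfle_total x v with h | h
        · have h1 : W.dfle (g.toFun ⟨x, fun h' => absurd h' hx⟩) (g.toFun ⟨v, fun _ => rfl⟩) :=
            g.map_dfle _ _ h
          have h2 : W.dfle (f.toFun ⟨v, T.le_refl v⟩) (f.toFun ⟨y, hy⟩) :=
            f.map_dfle ⟨v, T.le_refl v⟩ ⟨y, hy⟩ (T.dfle_of_le y v hy)
          exact W.dfle_trans _ _ _ (hfv ▸ h1) h2
        · exact absurd (T.downset_interval v v x y (T.le_refl v) hy h hxy) hx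
      · rw [hFb' x hx, hFb' y hy]
        exact g.map_dfle _ _ hxy
  refine ⟨⟨F, hinj, hml, hrl, hmd⟩, ⟨?_, ?_⟩, ?_⟩
  · exact FPTHom.ext' (funext fun a => hFa a.1 a.2)
  · exact FPTHom.ext' (funext fun b => hFb b)
  · rintro h ⟨ha, hb⟩
    refine FPTHom.ext' (funext fun w => ?_)
    by_cases hw : T.le w v
    · have h1 := congrArg (fun k => k.toFun ⟨w, hw⟩) ha
      simp only [FPTHom.comp, aboveIncl] at h1
      show h.toFun w = F w
      rw [hFa w hw]; exact h1
    · have h1 := congrArg (fun k => k.toFun ⟨w, fun h' => absurd h' hw⟩) hb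
      simp only [FPTHom.comp, belowIncl] at h1
      show h.toFun w = F w
      rw [hFb' w hw]; exact h1
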